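/- Let $t > 0$, let $S$ be a random variable taking values in $[0, t]$, and set $\Delta = t - S$. Suppose that on the event $\{N = 0\}$ one has $S = 0$, and conditionally on $\{N = n\}$ for $n \ge 1$, $S/t$ has a Beta$(n,1)$ distribution, where $N$ is Poisson with parameter $\lambda t$, $\lambda \ge 0$, independent in the appropriate sense. Then $\mathbb{E}[\Delta^{-1/2}] = \frac{1}{\sqrt{t}}\Big(\mathbb{P}(N = 0) + \sum_{n=1}^{\infty} \mathbb{P}(N = n)\, n\, B(n, \tfrac{1}{2})\Big)$, and there exists a constant $C(\lambda, T)$ such that $\mathbb{E}[\Delta^{-1/2}] \le C(\lambda,T)/\sqrt{t}$ for all $t \in (0, T]$. -/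

import Mathlib

/-!
On `{N = n}` with `n ≥ 1` the law of `S / t` is `μ {N = n}` times `Beta(n, 1)`, and for
`X ∼ Beta(a, b)` one has `E[(1 - X)^c] = B(a, b + c) / B(a, b)`. Since `B(n, 1) = 1 / n` and
`t - S = t (1 - S / t)`, this gives `E[(t - S)^c; N = n] = t^c μ {N = n} n B(n, 1 + c)`, while on
`{N = 0}` the integrand is `t^c`; summing over `n` gives the formula for `c = -1/2`.
For the bound, `B(n, 1/2) ≤ B(1, 1/2) = 2` and `n P(N = n) = λt P(N = n - 1)`, so the series
is at most `2λt`.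
-/

open MeasureTheory Set ProbabilityTheory
open scoped ENNReal NNReal

namespace MeasureTheory

lemma Measure.ext_of_Iic_of_compl_Icc_eq_zero {μ ν : Measure ℝ} [IsFiniteMeasure μ] {a b : ℝ}
    (hab : a ≤ b) (hμ : μ (Icc a b)ᶜ = 0) (hν : ν (Icc a b)ᶜ = 0)
    (h : ∀ u ∈ Icc a b, μ (Iic u) = ν (Iic u)) : μ = ν := by
  refine Measure.ext_of_Iic μ ν fun u => ?_
  rcases lt_or_ge u a with hua | hau
  · have hsub : Iic u ⊆ (Icc a b)ᶜ := fun x hx hx' => by linarith [hx'.1, mem_Iic.1 hx]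
    rw [measure_mono_null hsub hμ, measure_mono_null hsub hν]
  rcases le_or_gt u b with hub | hbu
  · exact h u ⟨hau, hub⟩
  · have hinter : Iic u ∩ Icc a b = Iic b ∩ Icc a b := by
      rw [inter_eq_right.2 fun x hx => hx.2.trans hbu.le, inter_eq_right.2 fun x hx => hx.2]
    rw [← measure_inter_conull hμ, ← measure_inter_conull hν, hinter,
      measure_inter_conull hμ, measure_inter_conull hν, h b ⟨hab, le_rfl⟩]

variable {Ω : Type*} [MeasurableSpace Ω] {μ : Measure Ω} {N : Ω → ℕ}

lemma lintegral_eq_tsum_setLIntegral_fiber (hN : Measurable N) (f : Ω → ℝ≥0∞) :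
    ∫⁻ ω, f ω ∂μ = ∑' n, ∫⁻ ω in {ω | N ω = n}, f ω ∂μ := by
  have h := lintegral_iUnion (μ := μ) (fun n => hN (measurableSet_singleton n))
    (pairwise_disjoint_fiber N) f
  rwa [← preimage_iUnion, iUnion_of_singleton, preimage_univ, Measure.restrict_univ] at h

lemma integral_eq_add_tsum_of_setLIntegral_fiber (hN : Measurable N) {f : Ω → ℝ}
    (hf_nonneg : ∀ ω, 0 ≤ f ω) (hf : AEStronglyMeasurable f μ) {a₀ : ℝ} {a : ℕ → ℝ}
    (ha₀ : 0 ≤ a₀) (ha : ∀ m, 0 ≤ a m) (ha_sum : Summable a)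
    (h₀ : ∫⁻ ω in {ω | N ω = 0}, ENNReal.ofReal (f ω) ∂μ = ENNReal.ofReal a₀)
    (hsucc : ∀ m,
      ∫⁻ ω in {ω | N ω = m + 1}, ENNReal.ofReal (f ω) ∂μ = ENNReal.ofReal (a m)) :
    ∫ ω, f ω ∂μ = a₀ + ∑' m, a m := by
  rw [integral_eq_lintegral_of_nonneg_ae (ae_of_all _ hf_nonneg) hf,
    lintegral_eq_tsum_setLIntegral_fiber hN, tsum_eq_zero_add' ENNReal.summable, h₀,
    tsum_congr hsucc, ← ENNReal.ofReal_tsum_of_nonneg ha ha_sum,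
    ← ENNReal.ofReal_add ha₀ (tsum_nonneg ha),
    ENNReal.toReal_ofReal (add_nonneg ha₀ (tsum_nonneg ha))]

end MeasureTheory

namespace ProbabilityTheory

lemma beta_comm (a b : ℝ) : beta a b = beta b a := by
  rw [beta, beta, mul_comm, add_comm]

lemma beta_one_right {a : ℝ} (ha : 0 < a) : beta a 1 = 1 / a := by
  rw [beta, Real.Gamma_one, mul_one, Real.Gamma_add_one ha.ne']
  field_simp [(Real.Gamma_pos_of_pos ha).ne']

lemma beta_one_left {b : ℝ} (hb : 0 < b) : beta 1 b = 1 / b := by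
  rw [beta_comm, beta_one_right hb]

lemma lintegral_Ioo_rpow_mul_one_sub_rpow {a b : ℝ} (ha : 0 < a) (hb : 0 < b) :
    ∫⁻ x in Ioo 0 1, ENNReal.ofReal (x ^ (a - 1) * (1 - x) ^ (b - 1)) =
      ENNReal.ofReal (beta a b) := by
  have hB := beta_pos ha hb
  have h := lintegral_betaPDF_eq_one ha hb
  simp_rw [lintegral_betaPDF, mul_assoc, ENNReal.ofReal_mul (one_div_pos.2 hB).le] at h
  rw [lintegral_const_mul' _ _ ENNReal.ofReal_ne_top, mul_comm] at h
  rw [ENNReal.eq_inv_of_mul_eq_one_left h, ← ENNReal.ofReal_inv_of_pos (one_div_pos.2 hB),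
    one_div, inv_inv]

lemma beta_le_beta_one_left {a b : ℝ} (ha : 1 ≤ a) (hb : 0 < b) : beta a b ≤ beta 1 b := by
  rw [← ENNReal.ofReal_le_ofReal_iff (beta_pos one_pos hb).le,
    ← lintegral_Ioo_rpow_mul_one_sub_rpow (by linarith) hb,
    ← lintegral_Ioo_rpow_mul_one_sub_rpow one_pos hb]
  refine setLIntegral_mono (by fun_prop) fun x hx => ENNReal.ofReal_le_ofReal ?_
  rw [sub_self, Real.rpow_zero]
  exact mul_le_mul_of_nonneg_right (Real.rpow_le_one hx.1.le hx.2.le (by linarith))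
    (Real.rpow_nonneg (by linarith [hx.2]) _)

lemma support_betaPDF_subset (a b : ℝ) : Function.support (betaPDF a b) ⊆ Ioo 0 1 := by
  intro x hx
  by_contra hx'
  rcases not_and_or.1 hx' with h | h
  · exact hx (betaPDF_eq_zero_of_nonpos (not_lt.1 h))
  · exact hx (betaPDF_eq_zero_of_one_le (not_lt.1 h))

lemma measurable_betaPDF (a b : ℝ) : Measurable (betaPDF a b) :=
  (measurable_betaPDFReal a b).ennreal_ofReal

lemma betaMeasure_compl_Icc (a b : ℝ) : betaMeasure a b (Icc 0 1)ᶜ = 0 := by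
  rw [betaMeasure, withDensity_apply _ measurableSet_Icc.compl]
  refine setLIntegral_eq_zero measurableSet_Icc.compl fun x hx => ?_
  by_contra h
  exact hx (Ioo_subset_Icc_self (support_betaPDF_subset a b h))

lemma betaMeasure_one_right_Iic {a u : ℝ} (ha : 0 < a) (hu : u ∈ Icc (0 : ℝ) 1) :
    betaMeasure a 1 (Iic u) = ENNReal.ofReal (u ^ a) := by
  have hpdf : ∀ x ∈ Ioo 0 u, betaPDF a 1 x = ENNReal.ofReal (a * x ^ (a - 1)) := by
    intro x hx
    rw [betaPDF_of_pos_lt_one hx.1 (hx.2.trans_le hu.2), beta_one_right ha, sub_self,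
      Real.rpow_zero, mul_one, one_div_one_div]
  have hint : ∫ x in (0 : ℝ)..u, a * x ^ (a - 1) = u ^ a := by
    rw [intervalIntegral.integral_const_mul, integral_rpow (Or.inl (by linarith)),
      sub_add_cancel, Real.zero_rpow ha.ne', sub_zero]
    field_simp
  rw [betaMeasure, withDensity_apply _ measurableSet_Iic, ← Iic_union_Ioc_eq_Iic hu.1,
    lintegral_union measurableSet_Ioc (Iic_disjoint_Ioc le_rfl),
    setLIntegral_eq_zero measurableSet_Iic fun x hx => betaPDF_eq_zero_of_nonpos hx, zero_add,
    Measure.restrict_congr_set Ioo_ae_eq_Ioc.symm, setLIntegral_congr_fun measurableSet_Ioo hpdf,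
    ← hint, intervalIntegral.integral_of_le hu.1, integral_Ioc_eq_integral_Ioo,
    ofReal_integral_eq_lintegral_ofReal]
  · exact (intervalIntegrable_iff_integrableOn_Ioo_of_le hu.1).1
      ((intervalIntegral.intervalIntegrable_rpow' (by linarith)).const_mul a)
  · exact ae_restrict_of_forall_mem measurableSet_Ioo fun x hx =>
      mul_nonneg ha.le (Real.rpow_nonneg hx.1.le _)

lemma lintegral_one_sub_rpow_betaMeasure {a b c : ℝ} (ha : 0 < a) (hb : 0 < b)
    (hbc : 0 < b + c) :
    ∫⁻ x, ENNReal.ofReal ((1 - x) ^ c) ∂betaMeasure a b =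
      ENNReal.ofReal (beta a (b + c) / beta a b) := by
  have hB := beta_pos ha hb
  have hpdf : ∀ x ∈ Ioo (0 : ℝ) 1, betaPDF a b x * ENNReal.ofReal ((1 - x) ^ c) =
      ENNReal.ofReal (1 / beta a b) * ENNReal.ofReal (x ^ (a - 1) * (1 - x) ^ (b + c - 1)) := by
    intro x hx
    have h1x : 0 < 1 - x := by linarith [hx.2]
    rw [betaPDF_of_pos_lt_one hx.1 hx.2, ← ENNReal.ofReal_mul' (Real.rpow_nonneg h1x.le c),
      ← ENNReal.ofReal_mul (one_div_pos.2 hB).le, show b + c - 1 = b - 1 + c by ring,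
      Real.rpow_add h1x]
    ring_nf
  rw [betaMeasure, lintegral_withDensity_eq_lintegral_mul _ (measurable_betaPDF a b)
      (by fun_prop)]
  simp only [Pi.mul_apply]
  rw [← setLIntegral_eq_of_support_subset
      ((Function.support_mul_subset_left _ _).trans (support_betaPDF_subset a b)),
    setLIntegral_congr_fun measurableSet_Ioo hpdf,
    lintegral_const_mul' _ _ ENNReal.ofReal_ne_top,
    lintegral_Ioo_rpow_mul_one_sub_rpow ha hbc, ← ENNReal.ofReal_mul (one_div_pos.2 hB).le]
  ring_nf

variable {Ω : Type*} [MeasurableSpace Ω] {μ : Measure Ω} [IsFiniteMeasure μ]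

lemma map_restrict_eq_smul_betaMeasure {A : Set Ω} (hA : MeasurableSet A) {X : Ω → ℝ}
    (hX : Measurable X) (hX_mem : ∀ ω ∈ A, X ω ∈ Icc 0 1) {a : ℝ} (ha : 0 < a)
    (hcdf : ∀ u ∈ Icc (0 : ℝ) 1,
      μ (A ∩ {ω | X ω ≤ u}) = ENNReal.ofReal (u ^ a) * μ A) :
    (μ.restrict A).map X = μ A • betaMeasure a 1 := by
  refine Measure.ext_of_Iic_of_compl_Icc_eq_zero zero_le_one ?_ ?_ fun u hu => ?_
  · exact ae_iff.1 <| (ae_map_iff hX.aemeasurable measurableSet_Icc).2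
      (ae_restrict_of_forall_mem hA hX_mem)
  · rw [Measure.smul_apply, betaMeasure_compl_Icc, smul_zero]
  · rw [Measure.map_apply hX measurableSet_Iic, Measure.restrict_apply' hA, inter_comm,
      Measure.smul_apply, betaMeasure_one_right_Iic ha hu, smul_eq_mul, mul_comm]
    exact hcdf u hu

lemma setLIntegral_sub_rpow_of_cdf_eq_rpow {A : Set Ω} (hA : MeasurableSet A) {S : Ω → ℝ}
    (hS : Measurable S) {t : ℝ} (ht : 0 < t) (hS_mem : ∀ ω ∈ A, S ω ∈ Icc 0 t) {a c : ℝ}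
    (ha : 0 < a) (hc : -1 < c)
    (hcdf : ∀ u ∈ Icc (0 : ℝ) 1,
      μ (A ∩ {ω | S ω ≤ u * t}) = ENNReal.ofReal (u ^ a) * μ A) :
    ∫⁻ ω in A, ENNReal.ofReal ((t - S ω) ^ c) ∂μ =
      ENNReal.ofReal (t ^ c * (a * beta a (1 + c))) * μ A := by
  have hX_mem : ∀ ω ∈ A, S ω / t ∈ Icc 0 1 := fun ω hω =>
    ⟨div_nonneg (hS_mem ω hω).1 ht.le, (div_le_one ht).2 (hS_mem ω hω).2⟩
  have hlaw := map_restrict_eq_smul_betaMeasure hA (hS.div_const t) hX_mem ha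
    fun u hu => by simpa only [div_le_iff₀ ht] using hcdf u hu
  have hscale : ∀ ω ∈ A, ENNReal.ofReal ((t - S ω) ^ c) =
      ENNReal.ofReal (t ^ c) * ENNReal.ofReal ((1 - S ω / t) ^ c) := fun ω hω => by
    rw [← ENNReal.ofReal_mul (Real.rpow_nonneg ht.le c),
      ← Real.mul_rpow ht.le (sub_nonneg.2 (hX_mem ω hω).2), mul_sub, mul_one,
      mul_div_cancel₀ _ ht.ne']
  calc ∫⁻ ω in A, ENNReal.ofReal ((t - S ω) ^ c) ∂μ
      = ∫⁻ ω in A, ENNReal.ofReal (t ^ c) * ENNReal.ofReal ((1 - S ω / t) ^ c) ∂μ :=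
        setLIntegral_congr_fun hA hscale
    _ = ENNReal.ofReal (t ^ c) *
          ∫⁻ x, ENNReal.ofReal ((1 - x) ^ c) ∂(μ.restrict A).map (S · / t) := by
        rw [lintegral_const_mul _ (by fun_prop), lintegral_map (by fun_prop) (hS.div_const t)]
    _ = ENNReal.ofReal (t ^ c) * (μ A * ENNReal.ofReal (beta a (1 + c) / beta a 1)) := by
        rw [hlaw, lintegral_smul_measure,
          lintegral_one_sub_rpow_betaMeasure ha one_pos (by linarith), smul_eq_mul]
    _ = ENNReal.ofReal (t ^ c * (a * beta a (1 + c))) * μ A := by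
        rw [mul_left_comm, ← ENNReal.ofReal_mul (Real.rpow_nonneg ht.le c), mul_comm,
          beta_one_right ha, div_div_eq_mul_div, div_one, mul_comm a]

theorem integral_sub_rpow_eq_of_cdf_fiber {N : Ω → ℕ} {S : Ω → ℝ} {t c : ℝ} (ht : 0 < t)
    (hc : -1 < c) (hN : Measurable N) (hS : Measurable S) (hS_mem : ∀ ω, S ω ∈ Icc 0 t)
    (hS_zero : ∀ ω, N ω = 0 → S ω = 0)
    (hcdf : ∀ n : ℕ, 1 ≤ n → ∀ u ∈ Icc (0 : ℝ) 1,
      μ {ω | N ω = n ∧ S ω ≤ u * t} = ENNReal.ofReal (u ^ n) * μ {ω | N ω = n})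
    (hsum : Summable fun m : ℕ => μ.real {ω | N ω = m + 1} * (m + 1) * beta (m + 1) (1 + c)) :
    ∫ ω, (t - S ω) ^ c ∂μ = t ^ c * (μ.real {ω | N ω = 0} +
      ∑' m : ℕ, μ.real {ω | N ω = m + 1} * (m + 1) * beta (m + 1) (1 + c)) := by
  have hfiber : ∀ n, MeasurableSet {ω | N ω = n} := fun n => hN (measurableSet_singleton n)
  have hterm_nonneg :
      ∀ m : ℕ, 0 ≤ μ.real {ω | N ω = m + 1} * (m + 1) * beta (m + 1) (1 + c) :=
    fun m => mul_nonneg (by positivity) (beta_pos (by positivity) (by linarith)).le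
  rw [mul_add, ← tsum_mul_left]
  refine integral_eq_add_tsum_of_setLIntegral_fiber hN
    (fun ω => Real.rpow_nonneg (sub_nonneg.2 (hS_mem ω).2) _)
    ((hS.const_sub t).pow_const _).aestronglyMeasurable (by positivity)
    (fun m => mul_nonneg (by positivity) (hterm_nonneg m)) (hsum.mul_left _) ?_ fun m => ?_
  · rw [setLIntegral_congr_fun (hfiber 0) fun ω hω => by rw [hS_zero ω hω, sub_zero],
      setLIntegral_const, ENNReal.ofReal_mul (by positivity), ofReal_measureReal]
  · rw [setLIntegral_sub_rpow_of_cdf_eq_rpow (hfiber _) hS ht (fun ω _ => hS_mem ω)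
        (a := m + 1) (by positivity) hc fun u hu => by exact_mod_cast hcdf (m + 1) (by omega) u hu,
      ← ofReal_measureReal, ← ENNReal.ofReal_mul' measureReal_nonneg]
    ring_nf

lemma poissonMeasure_real_succ_mul (r : ℝ≥0) (n : ℕ) :
    (poissonMeasure r).real {n + 1} * (n + 1) = r * (poissonMeasure r).real {n} := by
  rw [poissonMeasure_real_singleton, poissonMeasure_real_singleton, Nat.factorial_succ,
    Nat.cast_mul, pow_succ]
  field_simp
  push_cast
  ring

lemma poissonMeasure_real_succ_mul_beta_le (r : ℝ≥0) {b : ℝ} (hb : 0 < b) (m : ℕ) :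
    (poissonMeasure r).real {m + 1} * (m + 1) * beta (m + 1) b ≤
      r / b * (poissonMeasure r).real {m} := by
  have hβ : beta (m + 1) b ≤ 1 / b := beta_one_left hb ▸ beta_le_beta_one_left (by simp) hb
  rw [poissonMeasure_real_succ_mul, mul_right_comm, div_eq_mul_one_div (r : ℝ) b]
  exact mul_le_mul_of_nonneg_right (mul_le_mul_of_nonneg_left hβ r.2) measureReal_nonneg

lemma hasSum_poissonMeasure_real (r : ℝ≥0) :
    HasSum (fun n => (poissonMeasure r).real {n}) 1 := by
  simpa only [poissonMeasure_real_singleton] using hasSum_one_poissonMeasure r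

lemma summable_poissonMeasure_real_succ_mul_beta (r : ℝ≥0) {b : ℝ} (hb : 0 < b) :
    Summable fun m : ℕ => (poissonMeasure r).real {m + 1} * (m + 1) * beta (m + 1) b :=
  .of_nonneg_of_le (fun m => mul_nonneg (by positivity) (beta_pos (by positivity) hb).le)
    (poissonMeasure_real_succ_mul_beta_le r hb) ((hasSum_poissonMeasure_real r).summable.mul_left _)

lemma tsum_poissonMeasure_real_succ_mul_beta_le (r : ℝ≥0) {b : ℝ} (hb : 0 < b) :
    ∑' m : ℕ, (poissonMeasure r).real {m + 1} * (m + 1) * beta (m + 1) b ≤ r / b :=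
  calc ∑' m : ℕ, (poissonMeasure r).real {m + 1} * (m + 1) * beta (m + 1) b
      ≤ ∑' m : ℕ, r / b * (poissonMeasure r).real {m} :=
        (summable_poissonMeasure_real_succ_mul_beta r hb).tsum_le_tsum
          (poissonMeasure_real_succ_mul_beta_le r hb)
          ((hasSum_poissonMeasure_real r).summable.mul_left _)
    _ = r / b := by rw [tsum_mul_left, (hasSum_poissonMeasure_real r).tsum_eq, mul_one]

end ProbabilityTheory

/-- Last-jump-time estimate: if `N` is Poisson(λt), `S ∈ [0,t]` with `S = 0` on
`{N = 0}` and `S/t ∼ Beta(n,1)` conditionally on `{N = n}` (`n ≥ 1`), then with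
`Δ = t - S`,
`E[Δ^{-1/2}] = (1/√t)(P(N=0) + Σₙ P(N=n) n B(n,1/2))`, and there is a constant
`C = C(λ,T)` with `E[Δ^{-1/2}] ≤ C/√t` for all `t ∈ (0,T]`. -/
theorem last_jump_time_inverse_sqrt_bound (lam T : ℝ) (hlam : 0 ≤ lam) (hT : 0 < T) :
    ∃ C : ℝ, 0 < C ∧
      ∀ t : ℝ, t ∈ Set.Ioc 0 T →
      ∀ (Ω : Type) (_ : MeasurableSpace Ω) (μ : Measure Ω),
        IsProbabilityMeasure μ →
      ∀ (N : Ω → ℕ) (S : Ω → ℝ), Measurable N → Measurable S →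
        (∀ ω, S ω ∈ Set.Icc (0 : ℝ) t) →
        (∀ ω, N ω = 0 → S ω = 0) →
        (∀ n : ℕ, μ {ω | N ω = n} =
          ENNReal.ofReal (Real.exp (-(lam * t)) * (lam * t) ^ n / n.factorial)) →
        (∀ n : ℕ, 1 ≤ n → ∀ u ∈ Set.Icc (0 : ℝ) 1,
          μ {ω | N ω = n ∧ S ω ≤ u * t} = ENNReal.ofReal (u ^ n) * μ {ω | N ω = n}) →
        ((∫ ω, (t - S ω) ^ (-(1 / 2) : ℝ) ∂μ) =
            (1 / Real.sqrt t) *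
              ((μ {ω | N ω = 0}).toReal +
                ∑' n : ℕ, (μ {ω | N ω = n + 1}).toReal * (n + 1) *
                  (Real.Gamma (n + 1) * Real.Gamma (1 / 2) /
                    Real.Gamma ((n + 1 : ℝ) + 1 / 2)))
          ∧ (∫ ω, (t - S ω) ^ (-(1 / 2) : ℝ) ∂μ) ≤ C / Real.sqrt t) := by
  refine ⟨1 + 2 * lam * T, by positivity, ?_⟩
  rintro t ⟨ht, htT⟩ Ω _ μ _ N S hN hS hS_mem hS_zero hPois hcdf
  set r : ℝ≥0 := ⟨lam * t, mul_nonneg hlam ht.le⟩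
  have hlaw : ∀ n, μ.real {ω | N ω = n} = (poissonMeasure r).real {n} := fun n => by
    rw [measureReal_def, hPois, poissonMeasure_real_singleton,
      ENNReal.toReal_ofReal (by positivity)]
    rfl
  have hsqrt : t ^ (-(1 / 2) : ℝ) = 1 / Real.sqrt t := by
    rw [Real.rpow_neg ht.le, ← Real.sqrt_eq_rpow, one_div]
  have hhalf : (1 : ℝ) + -(1 / 2) = 1 / 2 := by norm_num
  have hformula := integral_sub_rpow_eq_of_cdf_fiber (c := -(1 / 2)) ht (by norm_num) hN hS
    hS_mem hS_zero hcdf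
    (by simpa only [hlaw, hhalf] using summable_poissonMeasure_real_succ_mul_beta r one_half_pos)
  rw [hsqrt, hhalf] at hformula
  -- `beta a b` unfolds to the Gamma quotient of the statement
  refine ⟨hformula, ?_⟩
  have htail := tsum_poissonMeasure_real_succ_mul_beta_le r one_half_pos
  simp only [← hlaw] at htail
  calc ∫ ω, (t - S ω) ^ (-(1 / 2) : ℝ) ∂μ
      ≤ 1 / Real.sqrt t * (1 + r / (1 / 2)) := by
        rw [hformula]
        gcongr
        exact measureReal_le_one
    _ ≤ (1 + 2 * lam * T) / Real.sqrt t := by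
        rw [one_div_mul_eq_div, show (r : ℝ) = lam * t from rfl]
        gcongr
        nlinarith [mul_le_mul_of_nonneg_left htT hlam]
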